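/- arXiv:2502.12903 — 4 statements merged into one kernel-verified Lean document; each statement's English description precedes it below -/
import Mathlib

section
/- Let s ≥ 1 and let c_1 ≤ … ≤ c_n be reals with c_{i+1} − c_i ≤ s for all 1 ≤ i ≤ n−1. Then for every feasible vector d ∈ ℝ^n there exists a feasible vector d' ∈ ℝ^n with exact spacing, i.e. (c_{i+1} + d'_{i+1}) − (c_i + d'_i) = s for all 1 ≤ i ≤ n−1, whose total moving distance satisfies ∑_{i=1}^n |d'_i| ≤ ∑_{i=1}^n |d_i|. Consequently the minimum total moving distance over all feasible vectors is attained by an equispace vector E_{x*} for some global minimiser x* of the equispace function E, i.e. the collection is optimally equispaceable. -/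
/-- Total moving distance of a moving-distance vector `d` for `n` intervals. -/
noncomputable def totalDist (n : ℕ) (d : ℕ → ℝ) : ℝ := ∑ i ∈ Finset.range n, |d i|

/-- `d` is feasible for centres `c`: after moving, consecutive centres are ≥ s apart. -/
def Feasible (s : ℝ) (n : ℕ) (c d : ℕ → ℝ) : Prop :=
  ∀ i : ℕ, i + 1 < n → (c (i + 1) + d (i + 1)) - (c i + d i) ≥ s

/-- The equispace function `E(x) = ∑_{i=1}^n |x − c_i − (n−i)s|` (0-based indices). -/
noncomputable def equispaceFn (s : ℝ) (n : ℕ) (c : ℕ → ℝ) (x : ℝ) : ℝ :=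
  ∑ i ∈ Finset.range n, |x - c i - ((n : ℝ) - 1 - (i : ℝ)) * s|

/-- The equispace vector `E_x`, moving the i-th centre to `x − (n−i)s` (0-based indices). -/
noncomputable def equispaceVec (s : ℝ) (n : ℕ) (c : ℕ → ℝ) (x : ℝ) : ℕ → ℝ :=
  fun i => x - ((n : ℝ) - 1 - (i : ℝ)) * s - c i

/-- The collection is optimally equispaceable: for every global minimiser `x*` of `E`,
the equispace vector `E_{x*}` is feasible and attains the minimum total moving distance. -/
def OptimallyEquispaceable (s : ℝ) (n : ℕ) (c : ℕ → ℝ) : Prop :=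
  ∀ x : ℝ, (∀ y : ℝ, equispaceFn s n c x ≤ equispaceFn s n c y) →
    Feasible s n c (equispaceVec s n c x) ∧
    ∀ d : ℕ → ℝ, Feasible s n c d →
      totalDist n (equispaceVec s n c x) ≤ totalDist n d

lemma chainMono {n : ℕ} {x : ℕ → ℝ} (hx : ∀ i, i + 1 < n → x i ≤ x (i + 1)) :
    ∀ i j, i ≤ j → j < n → x i ≤ x j := by
  intro i j hij hj
  induction j, hij using Nat.le_induction with
  | base => exact le_rfl
  | succ k hk ih => exact le_trans (ih (by omega)) (hx k hj)

/-- Key lemma: if `x` is nondecreasing and `a` nonincreasing on `range n`, then some single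
value `z` is pointwise at least as close to each `a i` as `x i` is. -/
lemma exists_pointwise_close (n : ℕ) (x a : ℕ → ℝ)
    (hx : ∀ i, i + 1 < n → x i ≤ x (i + 1))
    (ha : ∀ i, i + 1 < n → a (i + 1) ≤ a i) :
    ∃ z : ℝ, ∀ i, i < n → |z - a i| ≤ |x i - a i| := by
  classical
  have hxm : ∀ i j, i ≤ j → j < n → x i ≤ x j := chainMono hx
  have ham : ∀ i j, i ≤ j → j < n → a j ≤ a i := by
    intro i j hij hj
    have := chainMono (x := fun k => -a k) (n := n) (fun k hk => by simpa using ha k hk) i j hij hj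
    simpa using this
  rcases Nat.eq_zero_or_pos n with h0 | hn
  · exact ⟨0, fun i hi => by omega⟩
  by_cases hall : ∀ i, i < n → a i ≤ x i
  · refine ⟨a 0, fun i hi => ?_⟩
    have h1 : a i ≤ a 0 := ham 0 i (Nat.zero_le i) hi
    have h2 : a 0 ≤ x i := le_trans (hall 0 hn) (hxm 0 i (Nat.zero_le i) hi)
    rw [abs_of_nonneg (by linarith), abs_of_nonneg (by linarith)]; linarith
  push_neg at hall
  obtain ⟨k, hk, hka⟩ := hall
  set S := (Finset.range n).filter (fun j => x j < a j) with hS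
  have hSne : S.Nonempty := ⟨k, by simp [hS, Finset.mem_filter, Finset.mem_range, hk, hka]⟩
  set m := S.max' hSne with hm
  have hmS : m ∈ S := S.max'_mem hSne
  have hmn : m < n := Finset.mem_range.mp (Finset.mem_filter.mp hmS).1
  have hm1 : x m < a m := (Finset.mem_filter.mp hmS).2
  have hgt : ∀ j, m < j → j < n → a j ≤ x j := by
    intro j hj hjn
    by_contra h
    push_neg at h
    have hjS : j ∈ S := by simp [hS, Finset.mem_filter, Finset.mem_range, hjn, h]
    exact absurd (Finset.le_max' S j hjS) (by omega)
  by_cases hlast : m + 1 < n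
  · refine ⟨max (x m) (a (m + 1)), fun i hi => ?_⟩
    rcases le_or_gt i m with him | him
    · have h1 : x i ≤ x m := hxm i m him hmn
      have h2 : a m ≤ a i := ham i m him hmn
      have h3 : a (m + 1) ≤ a m := ha m hlast
      have hz : max (x m) (a (m + 1)) ≤ a i := max_le (by linarith) (by linarith)
      have hz2 : x i ≤ max (x m) (a (m + 1)) := le_trans h1 (le_max_left _ _)
      rw [abs_of_nonpos (by linarith), abs_of_nonpos (by linarith)]; linarith
    · have h1 : a i ≤ a (m + 1) := ham (m + 1) i him hi
      have h2 : x (m + 1) ≤ x i := hxm (m + 1) i him hi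
      have h3 : a (m + 1) ≤ x (m + 1) := hgt (m + 1) (Nat.lt_succ_self m) hlast
      have h4 : x m ≤ x (m + 1) := hx m hlast
      have hz : a i ≤ max (x m) (a (m + 1)) := le_trans h1 (le_max_right _ _)
      have hz2 : max (x m) (a (m + 1)) ≤ x i := max_le (by linarith) (by linarith)
      rw [abs_of_nonneg (by linarith), abs_of_nonneg (by linarith)]; linarith
  · refine ⟨a m, fun i hi => ?_⟩
    have him : i ≤ m := by omega
    have h1 : x i ≤ x m := hxm i m him hmn
    have h2 : a m ≤ a i := ham i m him hmn
    rw [abs_of_nonpos (by linarith), abs_of_nonpos (by linarith)]; linarith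

lemma equispaceVec_feasible (s : ℝ) (hs : 1 ≤ s) (n : ℕ) (c : ℕ → ℝ) (z : ℝ) :
    Feasible s n c (equispaceVec s n c z) := by
  intro i hi
  simp only [equispaceVec]
  push_cast
  ring_nf
  linarith [le_refl s]

lemma equispaceVec_exact (s : ℝ) (n : ℕ) (c : ℕ → ℝ) (z : ℝ) :
    ∀ i : ℕ, i + 1 < n →
      (c (i + 1) + equispaceVec s n c z (i + 1)) - (c i + equispaceVec s n c z i) = s := by
  intro i hi
  simp only [equispaceVec]
  push_cast
  ring

lemma totalDist_equispaceVec (s : ℝ) (n : ℕ) (c : ℕ → ℝ) (z : ℝ) :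
    totalDist n (equispaceVec s n c z) = equispaceFn s n c z := by
  unfold totalDist equispaceVec equispaceFn
  apply Finset.sum_congr rfl
  intro i _
  ring_nf

lemma improve (s : ℝ) (n : ℕ) (c : ℕ → ℝ)
    (hgap : ∀ i : ℕ, i + 1 < n → c (i + 1) - c i ≤ s)
    (d : ℕ → ℝ) (hd : Feasible s n c d) :
    ∃ z : ℝ, totalDist n (equispaceVec s n c z) ≤ totalDist n d := by
  set a : ℕ → ℝ := fun i => c i + ((n : ℝ) - 1 - (i : ℝ)) * s with haDef
  set x : ℕ → ℝ := fun i => c i + d i + ((n : ℝ) - 1 - (i : ℝ)) * s with hxDef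
  have hx : ∀ i, i + 1 < n → x i ≤ x (i + 1) := by
    intro i hi
    have := hd i hi
    simp only [hxDef]
    push_cast
    nlinarith [this]
  have ha : ∀ i, i + 1 < n → a (i + 1) ≤ a i := by
    intro i hi
    have := hgap i hi
    simp only [haDef]
    push_cast
    nlinarith [this]
  obtain ⟨z, hz⟩ := exists_pointwise_close n x a hx ha
  refine ⟨z, ?_⟩
  unfold totalDist equispaceVec
  apply Finset.sum_le_sum
  intro i hi
  have h1 := hz i (Finset.mem_range.mp hi)
  have e1 : z - ((n : ℝ) - 1 - (i : ℝ)) * s - c i = z - a i := by simp only [haDef]; ring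
  have e2 : d i = x i - a i := by simp only [hxDef, haDef]; ring
  rw [e1, e2]
  exact h1

/-- If `s ≥ 1` and `c_1 ≤ … ≤ c_n` with consecutive gaps at most `s`, then every
feasible vector can be improved to a feasible vector with exact spacing `s` and no larger total
moving distance; consequently the collection is optimally equispaceable. -/
theorem gapBounded_optimally_equispaceable (s : ℝ) (hs : 1 ≤ s) (n : ℕ) (c : ℕ → ℝ)
    (hmono : ∀ i : ℕ, i + 1 < n → c i ≤ c (i + 1))
    (hgap : ∀ i : ℕ, i + 1 < n → c (i + 1) - c i ≤ s) :
    (∀ d : ℕ → ℝ, Feasible s n c d →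
      ∃ d' : ℕ → ℝ, Feasible s n c d' ∧
        (∀ i : ℕ, i + 1 < n → (c (i + 1) + d' (i + 1)) - (c i + d' i) = s) ∧
        totalDist n d' ≤ totalDist n d) ∧
    OptimallyEquispaceable s n c := by
  constructor
  · intro d hd
    obtain ⟨z, hz⟩ := improve s n c hgap d hd
    exact ⟨equispaceVec s n c z, equispaceVec_feasible s hs n c z,
      equispaceVec_exact s n c z, hz⟩
  · intro xstar hxstar
    refine ⟨equispaceVec_feasible s hs n c xstar, ?_⟩
    intro d hd
    obtain ⟨z, hz⟩ := improve s n c hgap d hd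
    calc totalDist n (equispaceVec s n c xstar) = equispaceFn s n c xstar :=
          totalDist_equispaceVec s n c xstar
      _ ≤ equispaceFn s n c z := hxstar z
      _ = totalDist n (equispaceVec s n c z) := (totalDist_equispaceVec s n c z).symm
      _ ≤ totalDist n d := hz
end

section
/- Let s ≥ 1 and let I be a collection with centres c_1 ≤ … ≤ c_n and J a collection with centres c'_1 ≤ … ≤ c'_m, with c_n ≤ c'_1, such that I and J are each optimally equispaceable. Let x_2 be the largest global minimiser of the equispace function of I and y_1 the smallest global minimiser of the equispace function of J. Then the combined collection I ∪ J (with centres listed as c_1 ≤ … ≤ c_n ≤ c'_1 ≤ … ≤ c'_m) is optimally equispaceable if and only if y_1 ≤ x_2 + m·s. -/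
/-!
Put `a i = c i + (n - 1 - i) * s`. A displacement `d` is feasible exactly when `ψ = a + d` is
nondecreasing, and it costs `∑ |ψ i - a i|`; the equispace vector `E_x` is the constant fit `ψ ≡ x`,
of cost `E x = ∑ |x - a i|`. So the question is when constant fits are optimal nondecreasing fits.

If the constant `x` is an optimal fit, comparing it with the fit equal to `t ≤ x` on the first `k`
indices shows that each prefix cost `t ↦ ∑_{i<k} |t - a i|` is minimal at `x` on `(-∞, x]`, hence,
being convex, nonincreasing there. Flattening a nondecreasing fit with last value `w ≤ x` one prefix
at a time up to `w` thus never increases its cost; mirroring the indices handles fits whose first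
value lies above `x`.

For the union the targets of `I` are shifted by `m * s`. If `y₁ ≤ x₂ + m * s`, a feasible fit
splits at the seam into a fit of `I` ending at `w` and a fit of `J` starting at some `w' ≥ w`; by the
above and the monotonicity of the convex equispace functions away from their minimisers, each half
costs at least what the constant `u = max y₁ (min w (x₂ + m * s))` costs on it. Otherwise the fit
equal to `x₂ + m * s` on `I` and to `y₁` on `J` is feasible and costs `min E_I + min E_J`, so a
minimiser of the combined equispace function would have to minimise both halves, which is
impossible.
-/

open Finset

section ConvexMonotone

variable {𝕜 β : Type*} [Field 𝕜] [LinearOrder 𝕜] [IsStrictOrderedRing 𝕜]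
  [AddCommMonoid β] [LinearOrder β] [IsOrderedCancelAddMonoid β] [Module 𝕜 β]
  [PosSMulStrictMono 𝕜 β] {f : 𝕜 → β} {x : 𝕜}

theorem ConvexOn.antitoneOn_Iic (hf : ConvexOn 𝕜 Set.univ f) (hx : ∀ t ≤ x, f x ≤ f t) :
    AntitoneOn f (Set.Iic x) := by
  intro u _ v hv huv
  rcases (Set.mem_Iic.1 hv).lt_or_eq with hvx | rfl
  · exact hf.le_left_of_right_le'' trivial trivial huv hvx (hx v hv)
  · exact hx u huv

theorem ConvexOn.monotoneOn_Ici (hf : ConvexOn 𝕜 Set.univ f) (hx : ∀ t, x ≤ t → f x ≤ f t) :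
    MonotoneOn f (Set.Ici x) := by
  intro u hu v _ huv
  rcases (Set.mem_Ici.1 hu).lt_or_eq with hxu | rfl
  · exact hf.le_right_of_left_le'' trivial trivial hxu huv (hx u hu)
  · exact hx v huv

end ConvexMonotone

noncomputable def absDev (n : ℕ) (a : ℕ → ℝ) (t : ℝ) : ℝ := ∑ i ∈ range n, |t - a i|

def IsOptimalConstFit (n : ℕ) (a : ℕ → ℝ) (x : ℝ) : Prop :=
  ∀ ψ : ℕ → ℝ, (∀ i, i + 1 < n → ψ i ≤ ψ (i + 1)) → absDev n a x ≤ ∑ i ∈ range n, |ψ i - a i|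

def mirror (n : ℕ) (a : ℕ → ℝ) (i : ℕ) : ℝ := -a (n - 1 - i)

section AbsDev

variable {n : ℕ} {a ψ : ℕ → ℝ} {x : ℝ}

theorem convexOn_absDev (n : ℕ) (a : ℕ → ℝ) : ConvexOn ℝ Set.univ (absDev n a) := by
  induction n with
  | zero =>
    rw [show absDev 0 a = fun _ => 0 from funext fun _ => sum_range_zero _]
    exact convexOn_const 0 convex_univ
  | succ n ih =>
    rw [show absDev (n + 1) a = absDev n a + fun t => |t - a n| from
      funext fun _ => sum_range_succ _ _]
    exact ih.add (by simpa only [Real.dist_eq] using convexOn_univ_dist (a n))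

theorem continuous_absDev (n : ℕ) (a : ℕ → ℝ) : Continuous (absDev n a) := by
  unfold absDev
  fun_prop

theorem exists_forall_absDev_le (hn : 0 < n) (a : ℕ → ℝ) :
    ∃ x, ∀ y, absDev n a x ≤ absDev n a y := by
  refine (continuous_absDev n a).exists_forall_le_of_isBounded (a 0)
    ((Metric.isBounded_closedBall (x := a 0) (r := absDev n a (a 0))).subset fun t ht => ?_)
  calc dist t (a 0) = |t - a 0| := Real.dist_eq _ _
    _ ≤ absDev n a t := single_le_sum (f := fun i => |t - a i|) (fun i _ => abs_nonneg _)
        (mem_range.2 hn)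
    _ ≤ absDev n a (a 0) := ht

theorem absDev_add (n m : ℕ) (a : ℕ → ℝ) (t : ℝ) :
    absDev (n + m) a t = absDev n a t + absDev m (fun j => a (n + j)) t :=
  sum_range_add _ n m

theorem absDev_shift {a' : ℕ → ℝ} {r : ℝ} (ha : ∀ i < n, a' i = a i + r) (t : ℝ) :
    absDev n a' t = absDev n a (t - r) :=
  sum_congr rfl fun i hi => by rw [ha i (mem_range.1 hi), sub_sub, add_comm r]

theorem sum_abs_sub_mirror (ψ a : ℕ → ℝ) :
    ∑ i ∈ range n, |mirror n ψ i - mirror n a i| = ∑ i ∈ range n, |ψ i - a i| := by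
  simp only [mirror, neg_sub_neg, abs_sub_comm]
  exact sum_range_reflect (fun i => |ψ i - a i|) n

theorem absDev_mirror (a : ℕ → ℝ) (t : ℝ) : absDev n (mirror n a) (-t) = absDev n a t :=
  sum_abs_sub_mirror (fun _ => t) a

theorem mirror_mirror {i : ℕ} (hi : i < n) : mirror n (mirror n ψ) i = ψ i := by
  simp only [mirror, neg_neg, show n - 1 - (n - 1 - i) = i by omega]

theorem mirror_le_mirror_succ (hψ : ∀ i, i + 1 < n → ψ i ≤ ψ (i + 1)) {i : ℕ}
    (hi : i + 1 < n) : mirror n ψ i ≤ mirror n ψ (i + 1) := by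
  have h := hψ (n - 1 - (i + 1)) (by omega)
  rw [show n - 1 - (i + 1) + 1 = n - 1 - i by omega] at h
  exact neg_le_neg h

theorem isOptimalConstFit_mirror (h : IsOptimalConstFit n a x) :
    IsOptimalConstFit n (mirror n a) (-x) := by
  intro ψ hψ
  have h' := h (mirror n ψ) fun _ hi => mirror_le_mirror_succ hψ hi
  rw [absDev_mirror]
  calc absDev n a x ≤ ∑ i ∈ range n, |mirror n ψ i - a i| := h'
    _ = ∑ i ∈ range n, |mirror n (mirror n ψ) i - mirror n a i| := (sum_abs_sub_mirror _ _).symm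
    _ = ∑ i ∈ range n, |ψ i - mirror n a i| :=
        sum_congr rfl fun i hi => by rw [mirror_mirror (mem_range.1 hi)]

namespace IsOptimalConstFit

theorem shift {a' : ℕ → ℝ} {r : ℝ} (h : IsOptimalConstFit n a x) (ha : ∀ i < n, a' i = a i + r) :
    IsOptimalConstFit n a' (x + r) := by
  intro ψ hψ
  calc absDev n a' (x + r) = absDev n a x := by rw [absDev_shift ha, add_sub_cancel_right]
    _ ≤ ∑ i ∈ range n, |(ψ i - r) - a i| := h _ fun i hi => sub_le_sub_right (hψ i hi) r
    _ = ∑ i ∈ range n, |ψ i - a' i| :=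
        sum_congr rfl fun i hi => by rw [ha i (mem_range.1 hi), sub_sub, add_comm r]

theorem absDev_prefix_le {k : ℕ} {t : ℝ} (h : IsOptimalConstFit n a x) (hk : k ≤ n) (ht : t ≤ x) :
    absDev k a x ≤ absDev k a t := by
  have hstep := h (fun i => if i < k then t else x) fun i _ => by
    split_ifs <;> first | exact le_rfl | exact ht | omega
  rw [absDev, ← sum_range_add_sum_Ico _ hk, ← sum_range_add_sum_Ico _ hk] at hstep
  have hpre : ∑ i ∈ range k, |(if i < k then t else x) - a i| = absDev k a t :=
    sum_congr rfl fun i hi => by rw [if_pos (mem_range.1 hi)]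
  have hsuf : ∑ i ∈ Ico k n, |(if i < k then t else x) - a i| = ∑ i ∈ Ico k n, |x - a i| :=
    sum_congr rfl fun i hi => by rw [if_neg (not_lt.2 (mem_Ico.1 hi).1)]
  rw [hpre, hsuf] at hstep
  exact le_of_add_le_add_right hstep

theorem absDev_succ_le {k : ℕ} (h : IsOptimalConstFit n a x)
    (hψ : ∀ i, i + 1 < n → ψ i ≤ ψ (i + 1)) (hk : k < n) (hψk : ψ k ≤ x) :
    absDev (k + 1) a (ψ k) ≤ ∑ i ∈ range (k + 1), |ψ i - a i| := by
  induction k with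
  | zero => simp [absDev]
  | succ k ih =>
    have hmono := hψ k hk
    have hanti : AntitoneOn (absDev (k + 1) a) (Set.Iic x) :=
      (convexOn_absDev _ a).antitoneOn_Iic fun t ht => h.absDev_prefix_le (by omega) ht
    calc absDev (k + 1 + 1) a (ψ (k + 1))
        = absDev (k + 1) a (ψ (k + 1)) + |ψ (k + 1) - a (k + 1)| := sum_range_succ _ _
      _ ≤ absDev (k + 1) a (ψ k) + |ψ (k + 1) - a (k + 1)| := by
        gcongr
        exact hanti (hmono.trans hψk) hψk hmono
      _ ≤ ∑ i ∈ range (k + 1), |ψ i - a i| + |ψ (k + 1) - a (k + 1)| := by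
        gcongr
        exact ih (by omega) (hmono.trans hψk)
      _ = ∑ i ∈ range (k + 1 + 1), |ψ i - a i| := (sum_range_succ _ _).symm

theorem absDev_min_le (h : IsOptimalConstFit n a x) (hψ : ∀ i, i + 1 < n → ψ i ≤ ψ (i + 1)) :
    absDev n a (min (ψ (n - 1)) x) ≤ ∑ i ∈ range n, |ψ i - a i| := by
  rcases le_total (ψ (n - 1)) x with hle | hle
  · rw [min_eq_left hle]
    rcases n with _ | n
    · simp [absDev]
    · exact h.absDev_succ_le hψ n.lt_succ_self hle
  · rw [min_eq_right hle]
    exact h ψ hψ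

theorem absDev_max_le (h : IsOptimalConstFit n a x) (hψ : ∀ i, i + 1 < n → ψ i ≤ ψ (i + 1)) :
    absDev n a (max (ψ 0) x) ≤ ∑ i ∈ range n, |ψ i - a i| := by
  have hmin := (isOptimalConstFit_mirror h).absDev_min_le (ψ := mirror n ψ)
    fun _ hi => mirror_le_mirror_succ hψ hi
  rwa [mirror, Nat.sub_self, min_neg_neg, absDev_mirror, sum_abs_sub_mirror] at hmin

end IsOptimalConstFit

end AbsDev

section Concatenation

variable {n m : ℕ} {a : ℕ → ℝ} {x₂ y₁ : ℝ}

theorem le_of_forall_isOptimalConstFit (hnm : 0 < n + m)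
    (hx₂ : ∀ y, absDev n a x₂ ≤ absDev n a y)
    (hx₂top : ∀ z, (∀ y, absDev n a z ≤ absDev n a y) → z ≤ x₂)
    (hy₁ : ∀ y, absDev m (fun j => a (n + j)) y₁ ≤ absDev m (fun j => a (n + j)) y)
    (hy₁bot : ∀ z, (∀ y, absDev m (fun j => a (n + j)) z ≤ absDev m (fun j => a (n + j)) y) →
      y₁ ≤ z)
    (h : ∀ x, (∀ y, absDev (n + m) a x ≤ absDev (n + m) a y) → IsOptimalConstFit (n + m) a x) :
    y₁ ≤ x₂ := by
  by_contra! hlt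
  obtain ⟨x, hx⟩ := exists_forall_absDev_le hnm a
  have hcost := h x hx (fun i => if i < n then x₂ else y₁) fun i _ => by
    split_ifs <;> first | exact le_rfl | exact hlt.le | omega
  rw [absDev_add, sum_range_add] at hcost
  have hI : ∑ i ∈ range n, |(if i < n then x₂ else y₁) - a i| = absDev n a x₂ :=
    sum_congr rfl fun i hi => by rw [if_pos (mem_range.1 hi)]
  have hJ : ∑ j ∈ range m, |(if n + j < n then x₂ else y₁) - a (n + j)| =
      absDev m (fun j => a (n + j)) y₁ :=
    sum_congr rfl fun j _ => by rw [if_neg (by omega)]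
  rw [hI, hJ] at hcost
  have hxI := hx₂top x fun y => by linarith [hx₂ y, hy₁ x]
  have hxJ := hy₁bot x fun y => by linarith [hx₂ x, hy₁ y]
  linarith

theorem forall_isOptimalConstFit_of_le (hn : 0 < n) (hm : 0 < m)
    (hI : IsOptimalConstFit n a x₂) (hx₂ : ∀ y, absDev n a x₂ ≤ absDev n a y)
    (hJ : IsOptimalConstFit m (fun j => a (n + j)) y₁)
    (hy₁ : ∀ y, absDev m (fun j => a (n + j)) y₁ ≤ absDev m (fun j => a (n + j)) y)
    (hle : y₁ ≤ x₂) (x : ℝ) (hx : ∀ y, absDev (n + m) a x ≤ absDev (n + m) a y) :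
    IsOptimalConstFit (n + m) a x := by
  intro ψ hψ
  have hseam : ψ (n - 1) ≤ ψ n := by
    simpa only [Nat.sub_add_cancel hn] using hψ (n - 1) (by omega)
  set u := max y₁ (min (ψ (n - 1)) x₂)
  have hanti := (convexOn_absDev n a).antitoneOn_Iic fun t _ => hx₂ t
  have hmono := (convexOn_absDev m fun j => a (n + j)).monotoneOn_Ici fun t _ => hy₁ t
  rw [sum_range_add]
  calc absDev (n + m) a x ≤ absDev (n + m) a u := hx u
    _ = absDev n a u + absDev m (fun j => a (n + j)) u := absDev_add n m a u
    _ ≤ absDev n a (min (ψ (n - 1)) x₂) + absDev m (fun j => a (n + j)) (max (ψ n) y₁) := by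
      gcongr
      · exact hanti (min_le_right (ψ (n - 1)) x₂) (max_le hle (min_le_right _ _)) (le_max_right _ _)
      · exact hmono (le_max_left y₁ _) (le_max_right (ψ n) y₁)
          (max_le (le_max_right _ _) ((min_le_left _ _).trans (hseam.trans (le_max_left _ _))))
    _ ≤ _ := add_le_add (hI.absDev_min_le fun i hi => hψ i (by omega))
        (hJ.absDev_max_le fun j hj => hψ (n + j) (by omega))

end Concatenation

noncomputable def equispaceTarget (s : ℝ) (n : ℕ) (c : ℕ → ℝ) (i : ℕ) : ℝ :=
  c i + ((n : ℝ) - 1 - i) * s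

section Equispace

variable {s : ℝ} {n m : ℕ} {c c' : ℕ → ℝ}

theorem equispaceFn_eq_absDev : equispaceFn s n c = absDev n (equispaceTarget s n c) :=
  funext fun _ => sum_congr rfl fun i _ => by rw [equispaceTarget, sub_sub]

theorem equispaceVec_eq (x : ℝ) : equispaceVec s n c x = fun i => x - equispaceTarget s n c i := by
  funext i
  rw [equispaceVec, equispaceTarget]
  ring

theorem feasible_iff {d : ℕ → ℝ} : Feasible s n c d ↔
    ∀ i, i + 1 < n → equispaceTarget s n c i + d i ≤ equispaceTarget s n c (i + 1) + d (i + 1) := by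
  refine forall₂_congr fun i _ => ?_
  simp only [equispaceTarget, Nat.cast_add, Nat.cast_one]
  constructor <;> intro h <;> linarith

theorem optimallyEquispaceable_iff : OptimallyEquispaceable s n c ↔
    ∀ x, (∀ y, absDev n (equispaceTarget s n c) x ≤ absDev n (equispaceTarget s n c) y) →
      IsOptimalConstFit n (equispaceTarget s n c) x := by
  simp only [OptimallyEquispaceable, equispaceFn_eq_absDev]
  refine forall₂_congr fun x _ => ⟨fun h ψ hψ => ?_, fun h => ⟨?_, fun d hd => ?_⟩⟩
  · have hd := h.2 (fun i => ψ i - equispaceTarget s n c i)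
      (feasible_iff.2 fun i hi => by simpa only [add_sub_cancel] using hψ i hi)
    rwa [equispaceVec_eq] at hd
  · rw [equispaceVec_eq, feasible_iff]
    simp only [add_sub_cancel, le_refl, implies_true]
  · have hψ := h (fun i => equispaceTarget s n c i + d i) (feasible_iff.1 hd)
    simpa only [equispaceVec_eq, totalDist, absDev, add_sub_cancel_left] using hψ

theorem equispaceTarget_append_of_lt {i : ℕ} (hi : i < n) :
    equispaceTarget s (n + m) (fun i => if i < n then c i else c' (i - n)) i =
      equispaceTarget s n c i + m * s := by
  simp only [equispaceTarget, if_pos hi, Nat.cast_add]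
  ring

theorem equispaceTarget_append_add (j : ℕ) :
    equispaceTarget s (n + m) (fun i => if i < n then c i else c' (i - n)) (n + j) =
      equispaceTarget s m c' j := by
  simp only [equispaceTarget, add_lt_iff_neg_left, not_lt_zero, if_false, add_tsub_cancel_left,
    Nat.cast_add]
  ring

end Equispace

theorem union_optimally_equispaceable_iff_general (s : ℝ) (n m : ℕ)
    (hn : 1 ≤ n) (hm : 1 ≤ m) (c c' : ℕ → ℝ)
    (hI : OptimallyEquispaceable s n c)
    (hJ : OptimallyEquispaceable s m c')
    (x2 y1 : ℝ)
    (hx2min : ∀ y : ℝ, equispaceFn s n c x2 ≤ equispaceFn s n c y)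
    (hx2top : ∀ z : ℝ, (∀ y : ℝ, equispaceFn s n c z ≤ equispaceFn s n c y) → z ≤ x2)
    (hy1min : ∀ y : ℝ, equispaceFn s m c' y1 ≤ equispaceFn s m c' y)
    (hy1bot : ∀ z : ℝ, (∀ y : ℝ, equispaceFn s m c' z ≤ equispaceFn s m c' y) → y1 ≤ z) :
    OptimallyEquispaceable s (n + m) (fun i => if i < n then c i else c' (i - n)) ↔
      y1 ≤ x2 + (m : ℝ) * s := by
  set a := equispaceTarget s (n + m) (fun i => if i < n then c i else c' (i - n))
  have haI : ∀ i < n, a i = equispaceTarget s n c i + m * s :=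
    fun i hi => equispaceTarget_append_of_lt hi
  have haJ : (fun j => a (n + j)) = equispaceTarget s m c' :=
    funext equispaceTarget_append_add
  rw [equispaceFn_eq_absDev] at hx2min hx2top hy1min hy1bot
  rw [optimallyEquispaceable_iff] at hI hJ ⊢
  rw [← haJ] at hJ hy1min hy1bot
  have hx2min' : ∀ y, absDev n a (x2 + m * s) ≤ absDev n a y := fun y => by
    simpa only [absDev_shift haI, add_sub_cancel_right] using hx2min (y - m * s)
  have hx2top' : ∀ z, (∀ y, absDev n a z ≤ absDev n a y) → z ≤ x2 + m * s := fun z hz => by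
    have := hx2top (z - m * s) fun y => by
      simpa only [absDev_shift haI, add_sub_cancel_right] using hz (y + m * s)
    linarith
  exact ⟨le_of_forall_isOptimalConstFit (by omega) hx2min' hx2top' hy1min hy1bot,
    forall_isOptimalConstFit_of_le hn hm ((hI x2 hx2min).shift haI) hx2min' (hJ y1 hy1min) hy1min⟩

/-- For optimally equispaceable collections `I` (centres `c`, size `n`) and
`J` (centres `c'`, size `m`) with `c_n ≤ c'_1`, the combined collection `I ∪ J` is optimally
equispaceable iff `y₁ ≤ x₂ + m·s`, where `x₂` is the largest global minimiser of the equispace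
function of `I` and `y₁` the smallest global minimiser of that of `J`. -/
theorem union_optimally_equispaceable_iff (s : ℝ) (hs : 1 ≤ s) (n m : ℕ)
    (hn : 1 ≤ n) (hm : 1 ≤ m) (c c' : ℕ → ℝ)
    (hc : ∀ i : ℕ, i + 1 < n → c i ≤ c (i + 1))
    (hc' : ∀ i : ℕ, i + 1 < m → c' i ≤ c' (i + 1))
    (hcc' : c (n - 1) ≤ c' 0)
    (hI : OptimallyEquispaceable s n c)
    (hJ : OptimallyEquispaceable s m c')
    (x2 y1 : ℝ)
    (hx2min : ∀ y : ℝ, equispaceFn s n c x2 ≤ equispaceFn s n c y)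
    (hx2top : ∀ z : ℝ, (∀ y : ℝ, equispaceFn s n c z ≤ equispaceFn s n c y) → z ≤ x2)
    (hy1min : ∀ y : ℝ, equispaceFn s m c' y1 ≤ equispaceFn s m c' y)
    (hy1bot : ∀ z : ℝ, (∀ y : ℝ, equispaceFn s m c' z ≤ equispaceFn s m c' y) → y1 ≤ z) :
    OptimallyEquispaceable s (n + m) (fun i => if i < n then c i else c' (i - n)) ↔
      y1 ≤ x2 + (m : ℝ) * s :=
  union_optimally_equispaceable_iff_general s n m hn hm c c' hI hJ x2 y1 hx2min hx2top hy1min hy1bot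
end

section
/- Let (x, y) ∈ ℝ² and let N = {(x+i, y+j) : i, j ∈ {−1, 0, 1}, (i,j) ≠ (0,0)}. If p and p' are points of the convex hull of N satisfying ‖p − q‖₂ ≥ 63/64 and ‖p' − q‖₂ ≥ 63/64 for every q ∈ N, then ‖p − p'‖₂ < 1. In particular, the interior hole of a cell gadget admits at most one centre of a pairwise-disjoint family of open disks of radius 1/2. -/
/-- Euclidean distance in the plane `ℝ × ℝ`. -/
noncomputable def edist2 (p q : ℝ × ℝ) : ℝ :=
  Real.sqrt ((p.1 - q.1) ^ 2 + (p.2 - q.2) ^ 2)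

/-- Open Euclidean disk of radius `r` centred at `c`. -/
def odisk (r : ℝ) (c : ℝ × ℝ) : Set (ℝ × ℝ) := {p : ℝ × ℝ | edist2 p c < r}

/-- The eight unit-grid points surrounding `(x, y)`. -/
def nbr8 (x y : ℝ) : Set (ℝ × ℝ) :=
  {(x + 1, y), (x + 1, y + 1), (x, y + 1), (x - 1, y + 1),
   (x - 1, y), (x - 1, y - 1), (x, y - 1), (x + 1, y - 1)}

/-- The interior hole of a cell gadget: the convex hull of the eight surrounding centres minus
the union of the open balls of radius `63/64` around them. -/
def hole8 (x y : ℝ) : Set (ℝ × ℝ) :=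
  convexHull ℝ (nbr8 x y) \ ⋃ q ∈ nbr8 x y, odisk (63 / 64) q

lemma dist_sq_of {p q : ℝ × ℝ} (h : 63 / 64 ≤ edist2 p q) :
    (63 / 64 : ℝ) ^ 2 ≤ (p.1 - q.1) ^ 2 + (p.2 - q.2) ^ 2 := by
  have hnn : (0:ℝ) ≤ (p.1 - q.1) ^ 2 + (p.2 - q.2) ^ 2 := by positivity
  have h2 := pow_le_pow_left₀ (by norm_num : (0:ℝ) ≤ 63/64) h 2
  unfold edist2 at h2
  rwa [Real.sq_sqrt hnn] at h2

lemma key2 {w : ℝ} (h0 : 0 ≤ w) (h1 : w ≤ 1)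
    (hA : (16415/65536 : ℝ) ≤ w ^ 2) (hB : (16415/65536 : ℝ) ≤ (1 - w) ^ 2) : False := by
  have h1w : (0:ℝ) ≤ 1 - w := by linarith
  have hP : ((16415/65536 : ℝ)) * (16415/65536) ≤ w ^ 2 * (1 - w) ^ 2 :=
    mul_le_mul hA hB (by norm_num) (sq_nonneg w)
  have hQ : w * (1 - w) ≤ 1/4 := by nlinarith [sq_nonneg (w - 1/2)]
  have hnn : 0 ≤ w * (1 - w) := mul_nonneg h0 h1w
  nlinarith [mul_le_mul hQ hQ hnn (by norm_num : (0:ℝ) ≤ 1/4)]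

lemma key {u v : ℝ} (hu : u ≤ 1) (hv : -1 ≤ v) (hv' : v ≤ 1)
    (h1 : (63/64 : ℝ) ^ 2 ≤ (u - 1) ^ 2 + v ^ 2)
    (h2 : (63/64 : ℝ) ^ 2 ≤ (u - 1) ^ 2 + (v - 1) ^ 2)
    (h3 : (63/64 : ℝ) ^ 2 ≤ (u - 1) ^ 2 + (v + 1) ^ 2) : u < 39/256 := by
  by_contra h
  push_neg at h
  have h4 : (u - 1) ^ 2 ≤ (217/256 : ℝ) ^ 2 := by
    nlinarith [mul_nonneg (by linarith : (0:ℝ) ≤ u - 39/256) (by linarith : (0:ℝ) ≤ 1 - u)]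
  rcases le_or_gt 0 v with hv0 | hv0
  · exact key2 hv0 hv' (by nlinarith) (by nlinarith)
  · exact key2 (by linarith : (0:ℝ) ≤ -v) (by linarith) (by nlinarith) (by nlinarith)

lemma hull_box {x y : ℝ} {p : ℝ × ℝ} (hp : p ∈ convexHull ℝ (nbr8 x y)) :
    x - 1 ≤ p.1 ∧ p.1 ≤ x + 1 ∧ y - 1 ≤ p.2 ∧ p.2 ≤ y + 1 := by
  have hsub : convexHull ℝ (nbr8 x y) ⊆ Set.Icc (x-1) (x+1) ×ˢ Set.Icc (y-1) (y+1) := by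
    apply convexHull_min _ ((convex_Icc _ _).prod (convex_Icc _ _))
    intro q hq
    simp only [nbr8, Set.mem_insert_iff, Set.mem_singleton_iff] at hq
    rcases hq with rfl|rfl|rfl|rfl|rfl|rfl|rfl|rfl <;>
      exact ⟨⟨by norm_num <;> linarith, by norm_num <;> linarith⟩, by norm_num <;> linarith, by norm_num <;> linarith⟩
  have := hsub hp
  simp only [Set.mem_prod, Set.mem_Icc] at this
  exact ⟨this.1.1, this.1.2, this.2.1, this.2.2⟩

lemma dist_sq_of' {p : ℝ × ℝ} {a b : ℝ} (h : 63 / 64 ≤ edist2 p (a, b)) :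
    (63 / 64 : ℝ) ^ 2 ≤ (p.1 - a) ^ 2 + (p.2 - b) ^ 2 := by
  simpa using dist_sq_of h

set_option maxHeartbeats 1000000 in
lemma center_close {x y : ℝ} {p : ℝ × ℝ} (hp : p ∈ convexHull ℝ (nbr8 x y))
    (hd : ∀ q ∈ nbr8 x y, 63 / 64 ≤ edist2 p q) :
    |p.1 - x| < 39/256 ∧ |p.2 - y| < 39/256 := by
  obtain ⟨hx1, hx2, hy1, hy2⟩ := hull_box hp
  have dE := dist_sq_of' (hd (x + 1, y) (by simp [nbr8]))
  have dNE := dist_sq_of' (hd (x + 1, y + 1) (by simp [nbr8]))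
  have dN := dist_sq_of' (hd (x, y + 1) (by simp [nbr8]))
  have dNW := dist_sq_of' (hd (x - 1, y + 1) (by simp [nbr8]))
  have dW := dist_sq_of' (hd (x - 1, y) (by simp [nbr8]))
  have dSW := dist_sq_of' (hd (x - 1, y - 1) (by simp [nbr8]))
  have dS := dist_sq_of' (hd (x, y - 1) (by simp [nbr8]))
  have dSE := dist_sq_of' (hd (x + 1, y - 1) (by simp [nbr8]))
  have hE : p.1 - x < 39/256 :=
    key (u := p.1 - x) (v := p.2 - y) (by linarith) (by linarith) (by linarith)
      (by linarith [dE]) (by linarith [dNE]) (by linarith [dSE])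
  have hW : x - p.1 < 39/256 :=
    key (u := x - p.1) (v := p.2 - y) (by linarith) (by linarith) (by linarith)
      (by linarith [dW]) (by linarith [dNW]) (by linarith [dSW])
  have hN : p.2 - y < 39/256 :=
    key (u := p.2 - y) (v := p.1 - x) (by linarith) (by linarith) (by linarith)
      (by linarith [dN]) (by linarith [dNE]) (by linarith [dNW])
  have hS : y - p.2 < 39/256 :=
    key (u := y - p.2) (v := p.1 - x) (by linarith) (by linarith) (by linarith)
      (by linarith [dS]) (by linarith [dSE]) (by linarith [dSW])
  constructor <;> rw [abs_lt] <;> constructor <;> linarith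

lemma main_sq {x y : ℝ} {p p' : ℝ × ℝ}
    (hp : p ∈ convexHull ℝ (nbr8 x y)) (hp' : p' ∈ convexHull ℝ (nbr8 x y))
    (hd : ∀ q ∈ nbr8 x y, 63 / 64 ≤ edist2 p q)
    (hd' : ∀ q ∈ nbr8 x y, 63 / 64 ≤ edist2 p' q) :
    (p.1 - p'.1) ^ 2 + (p.2 - p'.2) ^ 2 < 1 := by
  obtain ⟨h1, h2⟩ := center_close hp hd
  obtain ⟨h1', h2'⟩ := center_close hp' hd'
  rw [abs_lt] at h1 h2 h1' h2'
  nlinarith [h1.1, h1.2, h2.1, h2.2, h1'.1, h1'.2, h2'.1, h2'.2,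
    sq_nonneg (p.1 - p'.1), sq_nonneg (p.2 - p'.2)]

/-- Any two points of the convex hull of `N = nbr8 x y` that are at Euclidean
distance `≥ 63/64` from every point of `N` are at distance `< 1` from each other; in particular
the interior hole of a cell gadget contains at most one centre of any pairwise-disjoint family
of open disks of radius `1/2`. -/
theorem cell_gadget_hole_one_disk (x y : ℝ) :
    (∀ p p' : ℝ × ℝ, p ∈ convexHull ℝ (nbr8 x y) → p' ∈ convexHull ℝ (nbr8 x y) →
      (∀ q ∈ nbr8 x y, 63 / 64 ≤ edist2 p q) → (∀ q ∈ nbr8 x y, 63 / 64 ≤ edist2 p' q) →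
      edist2 p p' < 1) ∧
    (∀ (ι : Type) (ctr : ι → ℝ × ℝ),
      (Pairwise fun i j => Disjoint (odisk (1 / 2) (ctr i)) (odisk (1 / 2) (ctr j))) →
      ∀ i j : ι, ctr i ∈ hole8 x y → ctr j ∈ hole8 x y → i = j) := by
  constructor
  · intro p p' hp hp' hd hd'
    have h := main_sq hp hp' hd hd'
    unfold edist2
    rw [show (1:ℝ) = Real.sqrt 1 by simp]
    exact Real.sqrt_lt_sqrt (by positivity) (by linarith)
  · intro ι ctr hdisj i j hi hj
    by_contra hne
    have hdi := hdisj hne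
    -- extract hull membership and distance conditions
    have extract : ∀ k, ctr k ∈ hole8 x y →
        ctr k ∈ convexHull ℝ (nbr8 x y) ∧ ∀ q ∈ nbr8 x y, 63 / 64 ≤ edist2 (ctr k) q := by
      intro k hk
      refine ⟨hk.1, fun q hq => ?_⟩
      have hk2 := hk.2
      simp only [Set.mem_iUnion, exists_prop, not_exists, not_and] at hk2
      have h2 := hk2 q hq
      simpa [odisk, not_lt] using h2
    obtain ⟨hci, hdi'⟩ := extract i hi
    obtain ⟨hcj, hdj'⟩ := extract j hj
    have hs := main_sq hci hcj hdi' hdj'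
    set a := ctr i
    set b := ctr j
    set m : ℝ × ℝ := ((a.1 + b.1) / 2, (a.2 + b.2) / 2)
    have hma : m ∈ odisk (1/2) a := by
      show edist2 m a < 1/2
      unfold edist2
      rw [Real.sqrt_lt' (by norm_num)]
      have : (m.1 - a.1) ^ 2 + (m.2 - a.2) ^ 2
          = ((a.1 - b.1) ^ 2 + (a.2 - b.2) ^ 2) / 4 := by
        simp only [m]
        ring
      rw [this]
      nlinarith [hs]
    have hmb : m ∈ odisk (1/2) b := by
      show edist2 m b < 1/2
      unfold edist2
      rw [Real.sqrt_lt' (by norm_num)]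
      have : (m.1 - b.1) ^ 2 + (m.2 - b.2) ^ 2
          = ((a.1 - b.1) ^ 2 + (a.2 - b.2) ^ 2) / 4 := by
        simp only [m]
        ring
      rw [this]
      nlinarith [hs]
    exact Set.disjoint_left.mp hdi hma hmb
end

section
/- (Vertical condition of blocked zones.) Let k ≥ 1 be an integer, r = (2^k − 1)/2^k, and let c₁ = (x, y) and c₂ = (x+1, y) be points of ℝ². Then every point (x', y') with x − 1/2 ≤ x' ≤ x + 3/2 and |y' − y| ≤ √(r² − 1/4) satisfies min(‖(x',y') − c₁‖₂, ‖(x',y') − c₂‖₂) ≤ r. -/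
/-- Vertical condition of blocked zones: for `k ≥ 1`, `r = (2^k − 1)/2^k`, and
centres `c₁ = (x, y)`, `c₂ = (x+1, y)`, every point `(x', y')` with `x − 1/2 ≤ x' ≤ x + 3/2` and
`|y' − y| ≤ √(r² − 1/4)` is within distance `r` of `c₁` or `c₂`. -/
theorem vertical_condition_blocked_zones (k : ℕ) (hk : 1 ≤ k) (r : ℝ)
    (hr : r = ((2 : ℝ) ^ k - 1) / 2 ^ k) (x y x' y' : ℝ)
    (hx1 : x - 1 / 2 ≤ x') (hx2 : x' ≤ x + 3 / 2)
    (hy : |y' - y| ≤ Real.sqrt (r ^ 2 - 1 / 4)) :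
    min (edist2 (x', y') (x, y)) (edist2 (x', y') (x + 1, y)) ≤ r := by
  have h2k : (2 : ℝ) ≤ 2 ^ k := by
    calc (2 : ℝ) = 2 ^ 1 := (pow_one 2).symm
    _ ≤ 2 ^ k := pow_le_pow_right₀ (by norm_num) hk
  have h2kpos : (0 : ℝ) < 2 ^ k := by positivity
  have hr2 : (1 : ℝ) / 2 ≤ r := by
    rw [hr, le_div_iff₀ h2kpos]; linarith
  have hr0 : (0 : ℝ) ≤ r := by linarith
  have hsq : (0 : ℝ) ≤ r ^ 2 - 1 / 4 := by nlinarith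
  have hy2 : (y' - y) ^ 2 ≤ r ^ 2 - 1 / 4 := by
    have := abs_nonneg (y' - y)
    calc (y' - y) ^ 2 = |y' - y| ^ 2 := (sq_abs _).symm
    _ ≤ Real.sqrt (r ^ 2 - 1 / 4) ^ 2 := by
        apply pow_le_pow_left₀ this hy
    _ = r ^ 2 - 1 / 4 := Real.sq_sqrt hsq
  have key : ∀ a : ℝ, (a - x') ^ 2 ≤ 1 / 4 → edist2 (x', y') (a, y) ≤ r := by
    intro a ha
    unfold edist2
    rw [show r = Real.sqrt (r ^ 2) from (Real.sqrt_sq hr0).symm]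
    apply Real.sqrt_le_sqrt
    have : (x' - a) ^ 2 = (a - x') ^ 2 := by ring
    simp only [this]
    nlinarith
  rcases le_or_gt x' (x + 1 / 2) with h | h
  · exact le_trans (min_le_left _ _) (key x (by nlinarith))
  · exact le_trans (min_le_right _ _) (key (x + 1) (by nlinarith))
end
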